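/- Every normalized block sequence (x_n) in (c₀₀, ‖·‖_{JT_{2,p}}) has a subsequence (x_{n_k}) that admits an upper ℓ₂-estimate with constant 4, i.e. ‖∑_k b_k x_{n_k}‖ ≤ 4(∑_k b_k²)^{1/2} for all finitely supported scalars (b_k). -/
import Mathlib


open Set Filter Topology

/-- `k` is an immediate successor of `n` in the order `le`. -/
def ImmSucc (le : ℕ → ℕ → Prop) (n k : ℕ) : Prop :=
  le n k ∧ n ≠ k ∧ ∀ m, le n m → le m k → m = n ∨ m = k

/-- The tree `𝒯`: a partial order on `ℕ` compatible with the usual order, in which the set of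
strict predecessors of every element is finite and linearly ordered, and every element has
infinitely many immediate successors. -/
structure IsJTTree (le : ℕ → ℕ → Prop) : Prop where
  refl : ∀ n, le n n
  antisymm : ∀ {m n}, le m n → le n m → m = n
  trans : ∀ {a b c}, le a b → le b c → le a c
  compat : ∀ {m n}, le m n → m ≤ n
  pred_finite : ∀ n, {m | le m n ∧ m ≠ n}.Finite
  pred_linear : ∀ n a b, le a n → le b n → le a b ∨ le b a
  succ_infinite : ∀ n, {k | ImmSucc le n k}.Infinite

/-- A segment of the tree: a nonempty set of the form `{k : m ⪯ k ∧ k ⪯ n}`. -/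
def IsSegment (le : ℕ → ℕ → Prop) (s : Set ℕ) : Prop :=
  ∃ m n, le m n ∧ s = {k | le m k ∧ le k n}

/-- A branch: a maximal linearly ordered subset of `ℕ`. -/
def IsBranch (le : ℕ → ℕ → Prop) (σ : Set ℕ) : Prop :=
  IsChain le σ ∧ ∀ τ, IsChain le τ → σ ⊆ τ → σ = τ

/-- `‖x‖_s = (∑_{i ∈ s} x(i)²)^(1/2)`. -/
noncomputable def segNorm (x : ℕ → ℝ) (s : Set ℕ) : ℝ :=
  Real.sqrt (∑' i, s.indicator (fun j => (x j) ^ 2) i)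

/-- The `JT_{2,p}` norm on finitely supported sequences:
`‖x‖ = sup {(∑_k ‖x‖_{s_k}^p)^(1/p) : s₁,…,s_n pairwise disjoint segments}`. -/
noncomputable def jtNorm (le : ℕ → ℕ → Prop) (p : ℝ) (x : ℕ → ℝ) : ℝ :=
  sSup { r : ℝ | ∃ (n : ℕ) (s : Fin n → Set ℕ),
    (∀ k, IsSegment le (s k)) ∧
    (∀ k l, k ≠ l → Disjoint (s k) (s l)) ∧
    r = (∑ k : Fin n, segNorm x (s k) ^ p) ^ (1 / p) }

/-- A block sequence of finitely supported vectors. -/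
def IsBlockSeq (x : ℕ → ℕ → ℝ) : Prop :=
  (∀ n, (Function.support (x n)).Finite) ∧
  ∀ n i j, x n i ≠ 0 → x (n + 1) j ≠ 0 → i < j

/-- The final segment `σ_{>l} = {k ∈ σ : k > l}`. -/
def finalSeg (σ : Set ℕ) (l : ℕ) : Set ℕ := {k ∈ σ | l < k}

/-- Two final segments are incomparable when their least elements are `le`-incomparable. -/
def IncompFinal (le : ℕ → ℕ → Prop) (A B : Set ℕ) : Prop :=
  A.Nonempty ∧ B.Nonempty ∧ ¬ le (sInf A) (sInf B) ∧ ¬ le (sInf B) (sInf A)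


def jtSet (le : ℕ → ℕ → Prop) (p : ℝ) (x : ℕ → ℝ) : Set ℝ :=
  { r : ℝ | ∃ (n : ℕ) (s : Fin n → Set ℕ),
    (∀ k, IsSegment le (s k)) ∧
    (∀ k l, k ≠ l → Disjoint (s k) (s l)) ∧
    r = (∑ k : Fin n, segNorm x (s k) ^ p) ^ (1 / p) }

lemma jtNorm_eq_sSup (le : ℕ → ℕ → Prop) (p : ℝ) (x : ℕ → ℝ) :
    jtNorm le p x = sSup (jtSet le p x) := rfl

lemma segNorm_nonneg (x : ℕ → ℝ) (s : Set ℕ) : 0 ≤ segNorm x s := Real.sqrt_nonneg _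

lemma zero_mem_jtSet (le : ℕ → ℕ → Prop) {p : ℝ} (hp : p ≠ 0) (x : ℕ → ℝ) :
    (0 : ℝ) ∈ jtSet le p x :=
  ⟨0, Fin.elim0, fun k => k.elim0, fun k => k.elim0, by
    simp [one_div, Real.zero_rpow (inv_ne_zero hp)]⟩

lemma sqrt_rpow' {a : ℝ} (ha : 0 ≤ a) (p : ℝ) : Real.sqrt a ^ p = a ^ (p / 2) := by
  rw [Real.sqrt_eq_rpow, ← Real.rpow_mul ha]
  congr 1
  ring

lemma jtSet_bddAbove (le : ℕ → ℕ → Prop) {p : ℝ} (hp : 0 < p) {x : ℕ → ℝ}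
    (hx : (Function.support x).Finite) : BddAbove (jtSet le p x) := by
  classical
  set t := hx.toFinset with ht
  set R : ℝ := ∑ j ∈ t, x j ^ 2 with hR
  have hR0 : 0 ≤ R := Finset.sum_nonneg fun _ _ => sq_nonneg _
  have hseg : ∀ s : Set ℕ, segNorm x s ≤ Real.sqrt R := by
    intro s
    apply Real.sqrt_le_sqrt
    have h0 : ∀ b ∉ t, s.indicator (fun j => x j ^ 2) b = 0 := by
      intro b hb
      have hxb : x b = 0 := by
        by_contra h
        exact hb (hx.mem_toFinset.mpr h)
      simp [Set.indicator_apply, hxb]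
    rw [tsum_eq_sum h0]
    apply Finset.sum_le_sum
    intro j _
    by_cases hj : j ∈ s
    · simp [Set.indicator_of_mem hj]
    · simp [Set.indicator_of_notMem hj, sq_nonneg]
  refine ⟨((t.card : ℝ) * Real.sqrt R ^ p) ^ (1 / p), ?_⟩
  rintro r ⟨n, s, hsegs, hdisj, rfl⟩
  have key : ∑ k : Fin n, segNorm x (s k) ^ p ≤ (t.card : ℝ) * Real.sqrt R ^ p := by
    set K := Finset.univ.filter (fun k => segNorm x (s k) ≠ 0) with hK
    have hsum : ∑ k : Fin n, segNorm x (s k) ^ p = ∑ k ∈ K, segNorm x (s k) ^ p := by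
      symm
      apply Finset.sum_subset (Finset.subset_univ _)
      intro k _ hk
      have h0 : segNorm x (s k) = 0 := by
        by_contra h
        exact hk (Finset.mem_filter.mpr ⟨Finset.mem_univ _, h⟩)
      rw [h0, Real.zero_rpow hp.ne']
    have hwit : ∀ k ∈ K, ∃ j, j ∈ s k ∧ x j ≠ 0 := by
      intro k hk
      have hk' : segNorm x (s k) ≠ 0 := (Finset.mem_filter.mp hk).2
      by_contra hcon
      push_neg at hcon
      apply hk'
      have hz : ∀ j, (s k).indicator (fun j => x j ^ 2) j = 0 := by
        intro j
        by_cases hj : j ∈ s k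
        · simp [Set.indicator_of_mem hj, hcon j hj]
        · simp [Set.indicator_of_notMem hj]
      simp [segNorm, hz]
    set g : Fin n → ℕ := fun k =>
      if h : ∃ j, j ∈ s k ∧ x j ≠ 0 then h.choose else 0 with hg
    have hcard : K.card ≤ t.card := by
      apply Finset.card_le_card_of_injOn g
      · intro k hk
        obtain h := hwit k hk
        have := h.choose_spec
        simp only [hg, dif_pos h]
        exact hx.mem_toFinset.mpr this.2
      · intro k hk l hl hkl
        by_contra hne
        have h1 := hwit k hk
        have h2 := hwit l hl
        have hk1 := h1.choose_spec
        have hl1 := h2.choose_spec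
        simp only [hg, dif_pos h1, dif_pos h2] at hkl
        exact (hdisj k l hne).le_bot ⟨hk1.1, hkl ▸ hl1.1⟩
    calc ∑ k : Fin n, segNorm x (s k) ^ p = ∑ k ∈ K, segNorm x (s k) ^ p := hsum
      _ ≤ ∑ k ∈ K, Real.sqrt R ^ p :=
          Finset.sum_le_sum fun k _ =>
            Real.rpow_le_rpow (segNorm_nonneg _ _) (hseg _) hp.le
      _ = (K.card : ℝ) * Real.sqrt R ^ p := by
          rw [Finset.sum_const, nsmul_eq_mul]
      _ ≤ (t.card : ℝ) * Real.sqrt R ^ p := by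
          apply mul_le_mul_of_nonneg_right _ (Real.rpow_nonneg (Real.sqrt_nonneg _) _)
          exact_mod_cast hcard
  refine Real.rpow_le_rpow ?_ key (by positivity)
  exact Finset.sum_nonneg fun k _ => Real.rpow_nonneg (segNorm_nonneg _ _) _

lemma sum_segNorm_rpow_le_one (le : ℕ → ℕ → Prop) {p : ℝ} (hp : 0 < p) {x : ℕ → ℝ}
    (hx : (Function.support x).Finite) (hnorm : jtNorm le p x = 1)
    {n : ℕ} {s : Fin n → Set ℕ} (hsegs : ∀ k, IsSegment le (s k))
    (hdisj : ∀ k l, k ≠ l → Disjoint (s k) (s l)) :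
    ∑ k : Fin n, segNorm x (s k) ^ p ≤ 1 := by
  set u := ∑ k : Fin n, segNorm x (s k) ^ p with hu
  have hu0 : 0 ≤ u := Finset.sum_nonneg fun k _ => Real.rpow_nonneg (segNorm_nonneg _ _) _
  have hmem : u ^ (1 / p) ∈ jtSet le p x := ⟨n, s, hsegs, hdisj, rfl⟩
  have hle : u ^ (1 / p) ≤ 1 := by
    have := le_csSup (jtSet_bddAbove le hp hx) hmem
    rwa [← jtNorm_eq_sSup, hnorm] at this
  calc u = (u ^ (1 / p)) ^ p := by rw [one_div, Real.rpow_inv_rpow hu0 hp.ne']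
    _ ≤ 1 ^ p := Real.rpow_le_rpow (Real.rpow_nonneg hu0 _) hle hp.le
    _ = 1 := Real.one_rpow p

lemma uniq_sq_sum {m : ℕ} (f : Fin m → ℝ)
    (h : ∀ i i', f i ≠ 0 → f i' ≠ 0 → i = i') :
    (∑ i, f i) ^ 2 = ∑ i, f i ^ 2 := by
  by_cases hE : ∃ i, f i ≠ 0
  · obtain ⟨i₀, hi₀⟩ := hE
    have h1 : ∀ b ∈ Finset.univ, b ≠ i₀ → f b = 0 := by
      intro b _ hb
      by_contra hfb
      exact hb (h b i₀ hfb hi₀)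
    rw [Finset.sum_eq_single i₀ h1 (by simp),
      Finset.sum_eq_single i₀ (fun b hb hbne => by rw [h1 b hb hbne]; ring) (by simp)]
  · push_neg at hE
    simp [hE]

lemma jtNorm_ne_one_of_zero (le : ℕ → ℕ → Prop) {p : ℝ} (hp : 0 < p) {x : ℕ → ℝ}
    (hx : ∀ j, x j = 0) : jtNorm le p x = 0 := by
  have h0 : ∀ s : Set ℕ, segNorm x s = 0 := by
    intro s
    have hz : ∀ j, s.indicator (fun j => x j ^ 2) j = 0 := by
      intro j
      simp [Set.indicator_apply, hx j]
    simp [segNorm, hz]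
  have hsub : jtSet le p x = {0} := by
    apply Set.eq_singleton_iff_unique_mem.mpr
    refine ⟨zero_mem_jtSet le hp.ne' x, ?_⟩
    rintro r ⟨n, s, _, _, rfl⟩
    simp [h0, Real.zero_rpow hp.ne', Real.zero_rpow (one_div_ne_zero hp.ne'),
      one_div, Real.zero_rpow (inv_ne_zero hp.ne')]
  rw [jtNorm_eq_sSup, hsub, csSup_singleton]
theorem stmt11 (le : ℕ → ℕ → Prop) (hT : IsJTTree le) (p : ℝ) (hp : 2 < p)
    (x : ℕ → ℕ → ℝ) (hblock : IsBlockSeq x)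
    (hnorm : ∀ n, jtNorm le p (x n) = 1) :
    ∃ k : ℕ → ℕ, StrictMono k ∧ ∀ (m : ℕ) (b : Fin m → ℝ),
      jtNorm le p (fun j => ∑ i : Fin m, b i * x (k i) j) ≤
        4 * Real.sqrt (∑ i : Fin m, b i ^ 2) := by
  classical
  have hp0 : 0 < p := by linarith
  have hp1 : (1 : ℝ) ≤ p / 2 := by linarith
  refine ⟨id, strictMono_id, ?_⟩
  intro m b
  simp only [id_eq]
  set y : ℕ → ℝ := fun j => ∑ i : Fin m, b i * x (↑i) j with hy
  set W : ℝ := ∑ i : Fin m, b i ^ 2 with hW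
  have hW0 : 0 ≤ W := Finset.sum_nonneg fun i _ => sq_nonneg _
  have hRHS0 : 0 ≤ 4 * Real.sqrt W := by positivity
  rw [jtNorm_eq_sSup]
  apply Real.sSup_le _ hRHS0
  rintro r ⟨n, s, hsegs, hdisj, rfl⟩
  have hfin := hblock.1
  have hne : ∀ a, ∃ j, x a j ≠ 0 := by
    intro a
    by_contra hcon
    push_neg at hcon
    have h0 := jtNorm_ne_one_of_zero le hp0 hcon
    rw [hnorm a] at h0
    norm_num at h0
  have hmono : ∀ a d i j, x a i ≠ 0 → x (a + d + 1) j ≠ 0 → i < j := by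
    intro a d
    induction d with
    | zero => exact fun i j h1 h2 => hblock.2 a i j h1 h2
    | succ d ih =>
      intro i j h1 h2
      obtain ⟨t, ht⟩ := hne (a + d + 1)
      exact lt_trans (ih i t h1 ht) (hblock.2 (a + d + 1) t j ht h2)
  have hlt : ∀ (i i' : ℕ), i < i' → ∀ a c, x i a ≠ 0 → x i' c ≠ 0 → a < c := by
    intro i i' hii a c h1 h2
    obtain ⟨d, rfl⟩ : ∃ d, i' = i + d + 1 := ⟨i' - i - 1, by omega⟩
    exact hmono i d a c h1 h2
  have hysq : ∀ j, y j ^ 2 = ∑ i : Fin m, b i ^ 2 * x (↑i) j ^ 2 := by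
    intro j
    have huniq : ∀ i i' : Fin m, b i * x (↑i) j ≠ 0 → b i' * x (↑i') j ≠ 0 → i = i' := by
      intro i i' h1 h2
      by_contra hne'
      have hx1 : x (↑i) j ≠ 0 := fun h => h1 (by rw [h, mul_zero])
      have hx2 : x (↑i') j ≠ 0 := fun h => h2 (by rw [h, mul_zero])
      have hvne : (↑i : ℕ) ≠ (↑i' : ℕ) := fun h => hne' (Fin.val_injective h)
      rcases lt_or_gt_of_ne hvne with h | h
      · exact lt_irrefl j (hlt _ _ h j j hx1 hx2)
      · exact lt_irrefl j (hlt _ _ h j j hx2 hx1)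
    have hs := uniq_sq_sum (fun i : Fin m => b i * x (↑i) j) huniq
    calc y j ^ 2 = ∑ i : Fin m, (b i * x (↑i) j) ^ 2 := by rw [hy]; exact hs
      _ = ∑ i : Fin m, b i ^ 2 * x (↑i) j ^ 2 := by
          apply Finset.sum_congr rfl
          intro i _
          ring
  set T : Fin m → Fin n → ℝ :=
    fun i k => ∑' j, (s k).indicator (fun j => x (↑i) j ^ 2) j with hTdef
  have hT0 : ∀ i k, 0 ≤ T i k := by
    intro i k
    exact tsum_nonneg fun j => Set.indicator_nonneg (fun j _ => sq_nonneg _) j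
  have hTseg : ∀ (i : Fin m) (k : Fin n), segNorm (x ↑i) (s k) = Real.sqrt (T i k) := by
    intro i k
    rw [hTdef]
    rfl
  set A : Fin n → ℝ := fun k => ∑ i : Fin m, b i ^ 2 * T i k with hAdef
  have hA0 : ∀ k, 0 ≤ A k :=
    fun k => Finset.sum_nonneg fun i _ => mul_nonneg (sq_nonneg _) (hT0 i k)
  have hyseg : ∀ k, segNorm y (s k) = Real.sqrt (A k) := by
    intro k
    have hpt : ∀ j, (s k).indicator (fun j => y j ^ 2) j
        = ∑ i : Fin m, b i ^ 2 * (s k).indicator (fun j => x (↑i) j ^ 2) j := by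
      intro j
      by_cases hj : j ∈ s k
      · simp only [Set.indicator_of_mem hj]
        exact hysq j
      · simp [Set.indicator_of_notMem hj]
    have htsum : (∑' j, (s k).indicator (fun j => y j ^ 2) j) = A k := by
      rw [tsum_congr hpt, Summable.tsum_finsetSum]
      · rw [hAdef, hTdef]
        apply Finset.sum_congr rfl
        intro i _
        rw [tsum_mul_left]
      · intro i _
        apply Summable.mul_left
        apply summable_of_ne_finset_zero (s := (hfin (↑i)).toFinset)
        intro j hj
        have hxj : x (↑i) j = 0 := by
          by_contra h
          exact hj ((hfin (↑i)).mem_toFinset.mpr h)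
        simp [Set.indicator_apply, hxj]
    exact congrArg Real.sqrt htsum
  by_cases hWz : W = 0
  · have hbz : ∀ i : Fin m, b i = 0 := by
      intro i
      have h2 := (Finset.sum_eq_zero_iff_of_nonneg fun i _ => sq_nonneg (b i)).mp
        (hW.symm.trans hWz) i (Finset.mem_univ i)
      exact (pow_eq_zero_iff (two_ne_zero)).mp h2
    have hAz : ∀ k, A k = 0 := by
      intro k
      rw [hAdef]
      apply Finset.sum_eq_zero
      intro i _
      rw [hbz i]
      ring
    have hz : ∀ k : Fin n, segNorm y (s k) ^ p = 0 := by
      intro k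
      rw [hyseg k, hAz k, Real.sqrt_zero, Real.zero_rpow hp0.ne']
    rw [Finset.sum_congr rfl fun k _ => hz k, Finset.sum_const, smul_zero,
      Real.zero_rpow (one_div_ne_zero hp0.ne')]
    exact hRHS0
  · have hWpos : 0 < W := lt_of_le_of_ne hW0 (Ne.symm hWz)
    have hwnn : ∀ i ∈ Finset.univ, (0:ℝ) ≤ b i ^ 2 / W :=
      fun i _ => div_nonneg (sq_nonneg _) hW0
    have hw' : ∑ i : Fin m, b i ^ 2 / W = 1 := by
      rw [← Finset.sum_div, ← hW, div_self hWz]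
    have hjen : ∀ k, A k ^ (p / 2)
        ≤ W ^ (p / 2) * ∑ i : Fin m, (b i ^ 2 / W) * T i k ^ (p / 2) := by
      intro k
      have hz' : ∀ i ∈ Finset.univ, (0:ℝ) ≤ T i k := fun i _ => hT0 i k
      have hjen0 := Real.rpow_arith_mean_le_arith_mean_rpow Finset.univ
        (fun i => b i ^ 2 / W) (fun i => T i k) hwnn hw' hz' hp1
      have hAk : A k = W * ∑ i : Fin m, (b i ^ 2 / W) * T i k := by
        rw [hAdef, Finset.mul_sum]
        apply Finset.sum_congr rfl
        intro i _
        field_simp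
      rw [hAk, Real.mul_rpow hW0
        (Finset.sum_nonneg fun i hi => mul_nonneg (hwnn i hi) (hT0 i k))]
      exact mul_le_mul_of_nonneg_left hjen0 (Real.rpow_nonneg hW0 _)
    have hSi : ∀ i : Fin m, ∑ k : Fin n, T i k ^ (p / 2) ≤ 1 := by
      intro i
      have hb1 := sum_segNorm_rpow_le_one le hp0 (hfin (↑i)) (hnorm (↑i)) hsegs hdisj
      calc ∑ k : Fin n, T i k ^ (p / 2)
          = ∑ k : Fin n, segNorm (x ↑i) (s k) ^ p := by
            apply Finset.sum_congr rfl
            intro k _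
            rw [hTseg i k, sqrt_rpow' (hT0 i k)]
        _ ≤ 1 := hb1
    have hsump : ∑ k : Fin n, segNorm y (s k) ^ p ≤ W ^ (p / 2) := by
      calc ∑ k : Fin n, segNorm y (s k) ^ p = ∑ k : Fin n, A k ^ (p / 2) := by
            apply Finset.sum_congr rfl
            intro k _
            rw [hyseg k, sqrt_rpow' (hA0 k)]
        _ ≤ ∑ k : Fin n, W ^ (p / 2) * ∑ i : Fin m, (b i ^ 2 / W) * T i k ^ (p / 2) :=
            Finset.sum_le_sum fun k _ => hjen k
        _ = W ^ (p / 2) * ∑ i : Fin m, (b i ^ 2 / W) * ∑ k : Fin n, T i k ^ (p / 2) := by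
            rw [← Finset.mul_sum, Finset.sum_comm]
            congr 1
            apply Finset.sum_congr rfl
            intro i _
            rw [Finset.mul_sum]
        _ ≤ W ^ (p / 2) * ∑ i : Fin m, (b i ^ 2 / W) * 1 := by
            apply mul_le_mul_of_nonneg_left _ (Real.rpow_nonneg hW0 _)
            apply Finset.sum_le_sum
            intro i hi
            exact mul_le_mul_of_nonneg_left (hSi i) (hwnn i hi)
        _ = W ^ (p / 2) := by
            simp only [mul_one]
            rw [hw', mul_one]
    have hsum0 : 0 ≤ ∑ k : Fin n, segNorm y (s k) ^ p :=
      Finset.sum_nonneg fun k _ => Real.rpow_nonneg (segNorm_nonneg _ _) _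
    have hfinal := Real.rpow_le_rpow hsum0 hsump (by positivity : (0:ℝ) ≤ 1 / p)
    have hWrw : (W ^ (p / 2)) ^ (1 / p) = Real.sqrt W := by
      rw [← Real.rpow_mul hW0]
      have : p / 2 * (1 / p) = 1 / 2 := by
        field_simp
      rw [this, ← Real.sqrt_eq_rpow]
    rw [hWrw] at hfinal
    have hsq := Real.sqrt_nonneg W
    linarith
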